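/- arXiv:2210.14206 — 2 statements merged into one kernel-verified Lean document; each statement's English description precedes it below -/
import Mathlib

section
/- For n >= 1, the maximal number of runs of a flattened parking function of length n is at most ceil(n/2), and this bound is achieved. -/
namespace FlatPF

/-- Decomposition of a word into maximal weakly increasing runs. -/
def runs : List ℕ → List (List ℕ)
  | [] => []
  | a :: l =>
    match runs l with
    | [] => [[a]]
    | [] :: rs => [a] :: rs
    | (b :: t) :: rs => if a ≤ b then (a :: b :: t) :: rs else [a] :: (b :: t) :: rs

/-- The number of maximal weakly increasing runs of a word. -/
def numRuns (w : List ℕ) : ℕ := (runs w).length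

/-- A word is flattened if the leading values of its runs are weakly increasing. -/
def IsFlattened (w : List ℕ) : Prop :=
  List.Chain' (· ≤ ·) ((runs w).map (fun r => r.headD 0))

/-- A word is a parking function: entries in `[m]` and the weakly increasing
rearrangement `(a'_1, …, a'_m)` satisfies `a'_i ≤ i`. -/
def IsPF (w : List ℕ) : Prop :=
  (∀ x ∈ w, 1 ≤ x ∧ x ≤ w.length) ∧
  ∀ i < w.length, (w.mergeSort (· ≤ ·)).getD i 0 ≤ i + 1

/-- `w` is obtained by inserting the elements of the multiset `S` into some
permutation of `[n]`, keeping the letters of the permutation in relative order. -/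
def IsInsertion (S : Multiset ℕ) (n : ℕ) (w : List ℕ) : Prop :=
  (↑w : Multiset ℕ) = ↑(List.range' 1 n) + S ∧
  ∃ p : List ℕ, p.Perm (List.range' 1 n) ∧ p.Sublist w

/-- Flattened `S`-insertion parking functions of order `n`. -/
def flatIns (S : Multiset ℕ) (n : ℕ) : Set (List ℕ) :=
  {w | IsInsertion S n w ∧ IsFlattened w}

/-- Flattened `S`-insertion parking functions of order `n` with exactly `k` runs. -/
def flatInsK (S : Multiset ℕ) (n k : ℕ) : Set (List ℕ) :=
  {w | IsInsertion S n w ∧ IsFlattened w ∧ numRuns w = k}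

/-- `f(S; n, k)`, the number of flattened `S`-insertion parking functions of order `n`
with exactly `k` runs.  In particular `fS 0 n k` is the number of flattened
permutations of `[n]` with `k` runs. -/
noncomputable def fS (S : Multiset ℕ) (n k : ℕ) : ℕ := (flatInsK S n k).ncard

/-!
Consecutive runs `r, r'` of any word are separated by a strict descent, `head r' < last r`; in a
flattened word also `head r ≤ head r'`, so every run except the last has length at least two, and
`k` runs need `2k - 1 ≤ n` letters. The bound is attained by the word `1 2 1 2 ⋯` of length `n`:
its runs `[1, 2], …, [1, 2]` (and `[1]` if `n` is odd) all start with `1`, and it rearranges to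
`1^⌈n/2⌉ 2^⌊n/2⌋`, a parking function.
-/

section Runs

variable {α : Type*}

lemma runs_cons_eq (a : ℕ) (l : List ℕ) : ∃ t rs, runs (a :: l) = (a :: t) :: rs := by
  unfold runs
  split
  · exact ⟨_, _, rfl⟩
  · exact ⟨_, _, rfl⟩
  · split <;> exact ⟨_, _, rfl⟩

lemma runs_cons_cons {a b : ℕ} {l t : List ℕ} {rs : List (List ℕ)}
    (h : runs (b :: l) = (b :: t) :: rs) :
    runs (a :: b :: l) = if a ≤ b then (a :: b :: t) :: rs else [a] :: (b :: t) :: rs := by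
  rw [runs, h]

lemma runs_cons_of_forall_mem_head?_lt {a : ℕ} {l : List ℕ} (h : ∀ b ∈ l.head?, b < a) :
    runs (a :: l) = [a] :: runs l := by
  rcases l with _ | ⟨b, l⟩
  · rfl
  · obtain ⟨t, rs, hb⟩ := runs_cons_eq b l
    rw [runs_cons_cons hb, if_neg (not_le.2 (h b rfl)), hb]

lemma flatten_runs (w : List ℕ) : (runs w).flatten = w := by
  induction w with
  | nil => rfl
  | cons a l ih =>
    rcases l with _ | ⟨b, l⟩
    · rfl
    · obtain ⟨t, rs, hb⟩ := runs_cons_eq b l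
      rw [hb] at ih
      rw [runs_cons_cons hb]
      split_ifs <;> simpa using ih

lemma nil_not_mem_runs (w : List ℕ) : [] ∉ runs w := by
  induction w with
  | nil => simp [runs]
  | cons a l ih =>
    rcases l with _ | ⟨b, l⟩
    · simp [runs]
    · obtain ⟨t, rs, hb⟩ := runs_cons_eq b l
      rw [hb] at ih
      rw [runs_cons_cons hb]
      split_ifs <;> simpa using ih

lemma isChain_runs (w : List ℕ) :
    (runs w).IsChain (fun r r' => r'.headD 0 < r.getLastD 0) := by
  induction w with
  | nil => simp [runs]
  | cons a l ih =>
    rcases l with _ | ⟨b, l⟩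
    · simp [runs]
    · obtain ⟨t, rs, hb⟩ := runs_cons_eq b l
      rw [hb] at ih
      rw [runs_cons_cons hb]
      split_ifs with hab
      · rcases rs with _ | ⟨r', rs⟩
        · simp
        · simpa using ih
      · simpa [not_le.1 hab] using ih

lemma two_le_length_of_headD_ne_getLastD {r : List α} {d : α} (h : r.headD d ≠ r.getLastD d) :
    2 ≤ r.length := by
  rcases r with _ | ⟨x, _ | ⟨y, t⟩⟩ <;> simp_all

lemma two_mul_length_le_length_flatten_add_one {rs : List (List α)} (hne : [] ∉ rs)
    (hc : rs.IsChain (fun r _ => 2 ≤ r.length)) : 2 * rs.length ≤ rs.flatten.length + 1 := by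
  induction rs with
  | nil => simp
  | cons r rs ih =>
    rcases rs with _ | ⟨r', rs⟩
    · have : r ≠ [] := fun h => hne (h ▸ List.mem_singleton_self _)
      simpa [Nat.one_le_iff_ne_zero] using this
    · rw [List.isChain_cons_cons] at hc
      have := ih (fun h => hne (List.mem_cons_of_mem _ h)) hc.2
      simp only [List.flatten_cons, List.length_append, List.length_cons] at this ⊢
      omega

lemma numRuns_le_of_isFlattened {w : List ℕ} (hw : IsFlattened w) :
    numRuns w ≤ (w.length + 1) / 2 := by
  have hheads := List.isChain_iff_getElem.1 ((List.isChain_map _).1 hw)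
  have hdesc := List.isChain_iff_getElem.1 (isChain_runs w)
  have hlong : (runs w).IsChain (fun r _ => 2 ≤ r.length) :=
    List.isChain_iff_getElem.2 fun i hi =>
      two_le_length_of_headD_ne_getLastD ((hheads i hi).trans_lt (hdesc i hi)).ne
  have := two_mul_length_le_length_flatten_add_one (nil_not_mem_runs w) hlong
  rw [flatten_runs] at this
  unfold numRuns
  omega

end Runs

section ParkingFunctions

lemma IsPF.perm {w w' : List ℕ} (hw : IsPF w) (h : w.Perm w') : IsPF w' := by
  have hsort : w'.mergeSort (· ≤ ·) = w.mergeSort (· ≤ ·) :=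
    ((List.mergeSort_perm _ _).trans (h.symm.trans (List.mergeSort_perm _ _).symm)).eq_of_pairwise'
      (List.pairwise_mergeSort' _ _) (List.pairwise_mergeSort' _ _)
  exact ⟨fun x hx => h.length_eq ▸ hw.1 x (h.mem_iff.2 hx),
    fun i hi => hsort ▸ hw.2 i (h.length_eq ▸ hi)⟩

lemma isPF_of_pairwise {w : List ℕ} (hw : w.Pairwise (· ≤ ·))
    (h : ∀ i (hi : i < w.length), 1 ≤ w[i] ∧ w[i] ≤ i + 1) : IsPF w := by
  refine ⟨fun x hx => ?_, fun i hi => ?_⟩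
  · obtain ⟨i, hi, rfl⟩ := List.getElem_of_mem hx
    exact ⟨(h i hi).1, (h i hi).2.trans hi⟩
  · rw [List.mergeSort_eq_self _ hw, List.getD_eq_getElem _ _ hi]
    exact (h i hi).2

lemma isPF_replicate_one_append_replicate_two {a b : ℕ} (hba : b ≤ a) :
    IsPF (List.replicate a 1 ++ List.replicate b 2) := by
  refine isPF_of_pairwise ?_ fun i hi => ?_
  · simp [List.pairwise_append, List.pairwise_replicate]
  · rw [List.getElem_append]
    split_ifs with hia
    · simp
    · simp only [List.length_append, List.length_replicate] at hi hia
      simp only [List.getElem_replicate]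
      omega

end ParkingFunctions

section Extremal

def altOneTwo : ℕ → List ℕ
  | 0 => []
  | 1 => [1]
  | n + 2 => 1 :: 2 :: altOneTwo n

lemma length_altOneTwo : ∀ n, (altOneTwo n).length = n
  | 0 => rfl
  | 1 => rfl
  | n + 2 => by simp [altOneTwo, length_altOneTwo n]

lemma perm_altOneTwo : ∀ n,
    (altOneTwo n).Perm (List.replicate ((n + 1) / 2) 1 ++ List.replicate (n / 2) 2)
  | 0 => .rfl
  | 1 => .rfl
  | n + 2 => by
    rw [show (n + 2 + 1) / 2 = (n + 1) / 2 + 1 by omega, show (n + 2) / 2 = n / 2 + 1 by omega,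
      List.replicate_succ, List.replicate_succ, List.cons_append]
    exact ((perm_altOneTwo n).cons 2).trans List.perm_middle.symm |>.cons 1

lemma isPF_altOneTwo (n : ℕ) : IsPF (altOneTwo n) :=
  (isPF_replicate_one_append_replicate_two (by omega)).perm (perm_altOneTwo n).symm

lemma runs_altOneTwo_add_two (n : ℕ) :
    runs (altOneTwo (n + 2)) = [1, 2] :: runs (altOneTwo n) := by
  have h2 : runs (2 :: altOneTwo n) = [2] :: runs (altOneTwo n) := by
    refine runs_cons_of_forall_mem_head?_lt ?_
    rcases n with _ | _ | n <;> simp [altOneTwo]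
  rw [altOneTwo, runs_cons_cons h2, if_pos (by norm_num)]

lemma map_headD_runs_altOneTwo : ∀ n,
    (runs (altOneTwo n)).map (·.headD 0) = List.replicate ((n + 1) / 2) 1
  | 0 => rfl
  | 1 => rfl
  | n + 2 => by
    rw [runs_altOneTwo_add_two, List.map_cons, map_headD_runs_altOneTwo n,
      show (n + 2 + 1) / 2 = (n + 1) / 2 + 1 by omega, List.replicate_succ]
    rfl

lemma isFlattened_altOneTwo (n : ℕ) : IsFlattened (altOneTwo n) := by
  rw [IsFlattened, map_headD_runs_altOneTwo]
  exact List.isChain_replicate_of_rel _ le_rfl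

lemma numRuns_altOneTwo (n : ℕ) : numRuns (altOneTwo n) = (n + 1) / 2 := by
  simpa [numRuns] using congrArg List.length (map_headD_runs_altOneTwo n)

end Extremal

end FlatPF

open FlatPF in
theorem stmt2_general (n : ℕ) :
    (∀ w : List ℕ, IsPF w → w.length = n → IsFlattened w → numRuns w ≤ (n + 1) / 2) ∧
    (∃ w : List ℕ, IsPF w ∧ w.length = n ∧ IsFlattened w ∧ numRuns w = (n + 1) / 2) :=
  ⟨fun _ _ hlen hw => hlen ▸ numRuns_le_of_isFlattened hw,
    altOneTwo n, isPF_altOneTwo n, length_altOneTwo n, isFlattened_altOneTwo n,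
    numRuns_altOneTwo n⟩

open FlatPF in
/-- For `n ≥ 1`, every flattened parking function of length `n` has at most
`⌈n/2⌉` runs, and this bound is achieved. -/
theorem stmt2 (n : ℕ) (hn : 1 ≤ n) :
    (∀ w : List ℕ, IsPF w → w.length = n → IsFlattened w → numRuns w ≤ (n + 1) / 2) ∧
    (∃ w : List ℕ, IsPF w ∧ w.length = n ∧ IsFlattened w ∧ numRuns w = (n + 1) / 2) :=
  stmt2_general n
end

section
/- Let S be a multiset with elements in [n-2]. Then the set of flattened (S union {n})-insertion parking functions of order n is in bijection with the set of flattened (S union {n-1})-insertion parking functions of order n; moreover, the bijection preserves the number of runs. -/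
/-!
In a word of either set, the large letters (those `≥ n - 1`) are two copies of one of `n - 1`, `n`
and one of the other, all other letters are `≤ n - 2`, and the first letter is not large, because a
flattened word starts with its minimum and contains `1`. The run heads of a word are its first
letter followed by its descent bottoms (the letters smaller than their left neighbour). Changing a
large letter between `n` and `n - 1` moves no descent and changes no descent bottom as long as its
left neighbour is smaller than `n` and its right neighbour is not `n - 1`. In each of the three
possible patterns of large letters the paper's choice of letter is of this kind, so flatness and
the number of runs are preserved, and running through the patterns shows that the two maps are
mutually inverse.
-/

namespace FlatPF

def descentBottoms : List ℕ → List ℕ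
  | a :: b :: l => (if b < a then [b] else []) ++ descentBottoms (b :: l)
  | _ => []

theorem descentBottoms_cons_cons (a b : ℕ) (l : List ℕ) :
    descentBottoms (a :: b :: l) = (if b < a then [b] else []) ++ descentBottoms (b :: l) := rfl

theorem descentBottoms_append_cons (X : List ℕ) (y : ℕ) (Z : List ℕ) :
    descentBottoms (X ++ y :: Z) = descentBottoms (X ++ [y]) ++ descentBottoms (y :: Z) := by
  induction X with
  | nil => rfl
  | cons x X ih =>
    cases X with
    | nil => simp [descentBottoms_cons_cons, descentBottoms]
    | cons x' X => simpa [descentBottoms_cons_cons] using ih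

theorem runs_cons (a : ℕ) (l : List ℕ) :
    ∃ r rs, runs (a :: l) = (a :: r) :: rs ∧ rs.map (·.headD 0) = descentBottoms (a :: l) := by
  induction l generalizing a with
  | nil => exact ⟨[], [], rfl, rfl⟩
  | cons b l ih =>
    obtain ⟨r, rs, hruns, hheads⟩ := ih b
    by_cases hab : a ≤ b
    · refine ⟨b :: r, rs, ?_, ?_⟩
      · rw [runs.eq_2, hruns]; exact if_pos hab
      · rw [descentBottoms_cons_cons, if_neg (not_lt.mpr hab), hheads, List.nil_append]
    · refine ⟨[], (b :: r) :: rs, ?_, ?_⟩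
      · rw [runs.eq_2, hruns]; exact if_neg hab
      · rw [descentBottoms_cons_cons, if_pos (lt_of_not_ge hab), List.map_cons, hheads]; rfl

theorem map_headD_runs_cons (a : ℕ) (l : List ℕ) :
    (runs (a :: l)).map (·.headD 0) = a :: descentBottoms (a :: l) := by
  obtain ⟨r, rs, hruns, hheads⟩ := runs_cons a l
  rw [hruns, List.map_cons, hheads]; rfl

theorem isFlattened_cons_iff (a : ℕ) (l : List ℕ) :
    IsFlattened (a :: l) ↔ (a :: descentBottoms (a :: l)).IsChain (· ≤ ·) := by
  rw [IsFlattened, map_headD_runs_cons]; rfl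

theorem numRuns_cons (a : ℕ) (l : List ℕ) :
    numRuns (a :: l) = (descentBottoms (a :: l)).length + 1 := by
  rw [numRuns, ← List.length_map (f := (·.headD 0)), map_headD_runs_cons, List.length_cons]

theorem exists_mem_descentBottoms_le (a : ℕ) (l : List ℕ) {x : ℕ} (hx : x ∈ a :: l) :
    ∃ h ∈ a :: descentBottoms (a :: l), h ≤ x := by
  induction l generalizing a with
  | nil => exact ⟨a, List.mem_cons_self, (List.mem_singleton.mp hx).ge⟩
  | cons b l ih =>
    rcases List.mem_cons.mp hx with rfl | hx
    · exact ⟨x, List.mem_cons_self, le_rfl⟩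
    obtain ⟨h, hmem, hle⟩ := ih b hx
    rw [descentBottoms_cons_cons]
    rcases List.mem_cons.mp hmem with rfl | hmem
    · by_cases hah : a ≤ h
      · exact ⟨a, List.mem_cons_self, hah.trans hle⟩
      · exact ⟨h, by simp [lt_of_not_ge hah], hle⟩
    · exact ⟨h, by simp [hmem], hle⟩

theorem head_le_of_isFlattened {a : ℕ} {l : List ℕ} (hw : IsFlattened (a :: l)) {x : ℕ}
    (hx : x ∈ a :: l) : a ≤ x := by
  obtain ⟨h, hmem, hle⟩ := exists_mem_descentBottoms_le a l hx
  rw [isFlattened_cons_iff, List.isChain_iff_pairwise] at hw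
  rcases List.mem_cons.mp hmem with rfl | hmem
  · exact hle
  · exact (List.rel_of_pairwise_cons hw hmem).trans hle

theorem descentBottoms_append_singleton {L : List ℕ} {c : ℕ}
    (hL : ∀ l ∈ L.getLast?, l ≤ c) :
    descentBottoms (L ++ [c]) = descentBottoms L := by
  rcases L.eq_nil_or_concat with rfl | ⟨L, l, rfl⟩
  · rfl
  · rw [List.concat_eq_append] at hL ⊢
    have hlc : ¬ c < l := not_lt.mpr (hL l (by simp))
    rw [List.append_assoc, List.singleton_append, descentBottoms_append_cons,
      descentBottoms_cons_cons, if_neg hlc]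
    exact List.append_nil _

theorem descentBottoms_cons_congr {c d : ℕ} {R : List ℕ}
    (hR : ∀ r ∈ R.head?, r < c ↔ r < d) :
    descentBottoms (c :: R) = descentBottoms (d :: R) := by
  cases R with
  | nil => rfl
  | cons r R => simp only [descentBottoms_cons_cons, if_congr (hR r rfl) rfl rfl]

theorem descentBottoms_replace {L R : List ℕ} {c d : ℕ}
    (hL : ∀ l ∈ L.getLast?, l ≤ c ∧ l ≤ d) (hR : ∀ r ∈ R.head?, r < c ↔ r < d) :
    descentBottoms (L ++ c :: R) = descentBottoms (L ++ d :: R) := by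
  rw [descentBottoms_append_cons L c, descentBottoms_append_cons L d,
    descentBottoms_append_singleton (fun l hl => (hL l hl).1),
    descentBottoms_append_singleton (fun l hl => (hL l hl).2), descentBottoms_cons_congr hR]

theorem isInsertion_iff {S : Multiset ℕ} {n : ℕ} {w : List ℕ} :
    IsInsertion S n w ↔ (w : Multiset ℕ) = ↑(List.range' 1 n) + S :=
  ⟨And.left, fun h => ⟨h, Multiset.coe_le.mp (h ▸ Multiset.le_add_right _ _)⟩⟩

theorem isInsertion_replace {S : Multiset ℕ} {n c d : ℕ} {L R : List ℕ}
    (h : IsInsertion (S + {c}) n (L ++ c :: R)) : IsInsertion (S + {d}) n (L ++ d :: R) := by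
  have hmid (x : ℕ) : ((L ++ x :: R : List ℕ) : Multiset ℕ) = x ::ₘ ↑(L ++ R) :=
    Multiset.coe_eq_coe.mpr List.perm_middle
  have hadd (x : ℕ) : ↑(List.range' 1 n) + (S + {x}) = x ::ₘ (↑(List.range' 1 n) + S) := by
    rw [← add_assoc, add_comm, Multiset.singleton_add]
  rw [isInsertion_iff, hmid, hadd, Multiset.cons_inj_right] at h ⊢
  exact h

theorem replace_mem_flatIns {S : Multiset ℕ} {n c d : ℕ} {L R : List ℕ}
    (hw : L ++ c :: R ∈ flatIns (S + {c}) n) (hL₀ : L ≠ [])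
    (hL : ∀ l ∈ L.getLast?, l ≤ c ∧ l ≤ d) (hR : ∀ r ∈ R.head?, r < c ↔ r < d) :
    L ++ d :: R ∈ flatIns (S + {d}) n ∧ numRuns (L ++ d :: R) = numRuns (L ++ c :: R) := by
  obtain ⟨hins, hflat⟩ := hw
  have hdesc := descentBottoms_replace hL hR
  obtain ⟨a, L, rfl⟩ := List.exists_cons_of_ne_nil hL₀
  refine ⟨⟨isInsertion_replace hins, ?_⟩, ?_⟩ <;>
    simp only [List.cons_append] at hdesc hflat ⊢
  · rwa [isFlattened_cons_iff, ← hdesc, ← isFlattened_cons_iff]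
  · rw [numRuns_cons, numRuns_cons, hdesc]

theorem filter_pred_le_range'_one (n : ℕ) (hn : 2 ≤ n) :
    (List.range' 1 n).filter (n - 1 ≤ ·) = [n - 1, n] := by
  obtain ⟨m, rfl⟩ := Nat.exists_eq_add_of_le' hn
  rw [← List.range'_append (m := m) (n := 2) (step := 1), List.filter_append,
    List.filter_eq_nil_iff.mpr (fun a ha => by simp at ha ⊢; omega)]
  simp [List.range']
  omega

theorem filter_pred_le_perm {S : Multiset ℕ} {n u : ℕ} {w : List ℕ} (hn : 2 ≤ n)
    (hS : ∀ s ∈ S, s ≤ n - 2) (hu : n - 1 ≤ u) (hw : IsInsertion (S + {u}) n w) :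
    (w.filter (n - 1 ≤ ·)).Perm [n - 1, n, u] := by
  rw [← Multiset.coe_eq_coe, ← Multiset.filter_coe, isInsertion_iff.mp hw,
    Multiset.filter_add, Multiset.filter_add, Multiset.filter_coe,
    filter_pred_le_range'_one n hn,
    Multiset.filter_eq_nil.mpr (fun s hs => by have := hS s hs; omega),
    Multiset.filter_singleton, if_pos hu]
  rfl

theorem eq_or_eq_or_eq_of_perm {α : Type*} [DecidableEq α] {a b : α} {l : List α} (hab : a ≠ b)
    (h : l.Perm [a, b, b]) :
    l = [a, b, b] ∨ l = [b, a, b] ∨ l = [b, b, a] := by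
  obtain ⟨x, y, z, rfl⟩ : ∃ x y z, l = [x, y, z] := by
    match l, h.length_eq with
    | [x, y, z], _ => exact ⟨x, y, z, rfl⟩
  have hmem : ∀ c ∈ [x, y, z], c = a ∨ c = b := fun c hc => by simpa using h.subset hc
  have hca := h.count_eq a
  have hcb := h.count_eq b
  rcases hmem x (by simp) with rfl | rfl <;> rcases hmem y (by simp) with rfl | rfl <;>
    rcases hmem z (by simp) with rfl | rfl <;> simp_all [hab.symm]

theorem exists_eq_append_of_filter_eq {α : Type*} {p : α → Bool} {l : List α} {x y z : α}
    (h : l.filter p = [x, y, z]) :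
    ∃ P Q R T, l = P ++ x :: Q ++ y :: R ++ z :: T ∧
      (∀ c ∈ P, ¬ p c) ∧ (∀ c ∈ Q, ¬ p c) ∧ (∀ c ∈ R, ¬ p c) ∧ ∀ c ∈ T, ¬ p c := by
  obtain ⟨P, l, rfl, hP, -, h⟩ := List.filter_eq_cons_iff.mp h
  obtain ⟨Q, l, rfl, hQ, -, h⟩ := List.filter_eq_cons_iff.mp h
  obtain ⟨R, T, rfl, hR, -, hT⟩ := List.filter_eq_cons_iff.mp h
  exact ⟨P, Q, R, T, by simp, hP, hQ, hR, List.filter_eq_nil_iff.mp hT⟩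

theorem one_mem_of_isInsertion {S : Multiset ℕ} {n : ℕ} {w : List ℕ} (hn : 1 ≤ n)
    (hw : IsInsertion S n w) : 1 ∈ w := by
  obtain ⟨-, p, hp, hpw⟩ := hw
  exact hpw.subset (hp.mem_iff.mpr (List.mem_range'_1.mpr ⟨le_rfl, by omega⟩))

theorem exists_eq_large_letters {S : Multiset ℕ} {n u : ℕ} {w : List ℕ} (hn : 3 ≤ n)
    (hS : ∀ s ∈ S, s ≤ n - 2) (hu : n - 1 ≤ u) (hw : w ∈ flatIns (S + {u}) n) :
    ∃ P Q R T x y z, w = P ++ x :: Q ++ y :: R ++ z :: T ∧ P ≠ [] ∧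
      (∀ c ∈ P, c < n - 1) ∧ (∀ c ∈ Q, c < n - 1) ∧ (∀ c ∈ R, c < n - 1) ∧
      (∀ c ∈ T, c < n - 1) ∧ [x, y, z].Perm [n - 1, n, u] := by
  have hperm := filter_pred_le_perm (by omega) hS hu hw.1
  obtain ⟨x, y, z, hxyz⟩ : ∃ x y z, w.filter (n - 1 ≤ ·) = [x, y, z] := by
    match w.filter (n - 1 ≤ ·), hperm.length_eq with
    | [x, y, z], _ => exact ⟨x, y, z, rfl⟩
  have hx : n - 1 ≤ x := by
    have hxmem : x ∈ w.filter (n - 1 ≤ ·) := by rw [hxyz]; exact List.mem_cons_self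
    exact of_decide_eq_true (List.mem_filter.mp hxmem).2
  obtain ⟨P, Q, R, T, rfl, hP, hQ, hR, hT⟩ := exists_eq_append_of_filter_eq hxyz
  have small {L : List ℕ} (hL : ∀ c ∈ L, ¬ decide (n - 1 ≤ c)) : ∀ c ∈ L, c < n - 1 :=
    fun c hc => by have := hL c hc; simp at this; omega
  refine ⟨P, Q, R, T, x, y, z, rfl, ?_, small hP, small hQ, small hR, small hT, hxyz ▸ hperm⟩
  rintro rfl
  have h1 := head_le_of_isFlattened hw.2 (one_mem_of_isInsertion (by omega) hw.1)
  omega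

def replaceLast {α : Type*} [BEq α] (l : List α) (a b : α) : List α :=
  (l.reverse.replace a b).reverse

theorem replace_append_cons {α : Type*} [BEq α] [LawfulBEq α] {L R : List α} {a b : α}
    (h : a ∉ L) : (L ++ a :: R).replace a b = L ++ b :: R := by
  rw [List.replace_append_right h, List.replace_cons_self]

theorem replaceLast_append_cons {α : Type*} [BEq α] [LawfulBEq α] {L R : List α} {a b : α}
    (h : a ∉ R) : replaceLast (L ++ a :: R) a b = L ++ b :: R := by
  simp [replaceLast, List.replace_append_right, h]

theorem mem_getLast?_append_cons {α : Type*} {L R : List α} {x l : α}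
    (h : l ∈ (L ++ x :: R).getLast?) : l = x ∨ l ∈ R := by
  rw [List.getLast?_append, List.getLast?_cons] at h
  rcases R.eq_nil_or_concat with rfl | ⟨R, r, rfl⟩ <;> simp_all

theorem filter_le_eq_of_lt_of_le {m x y z : ℕ} {P Q R T : List ℕ} (hP : ∀ c ∈ P, c < m)
    (hQ : ∀ c ∈ Q, c < m) (hR : ∀ c ∈ R, c < m) (hT : ∀ c ∈ T, c < m)
    (hx : m ≤ x) (hy : m ≤ y) (hz : m ≤ z) :
    (P ++ x :: Q ++ y :: R ++ z :: T).filter (m ≤ ·) = [x, y, z] := by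
  have hnil {L : List ℕ} (hL : ∀ c ∈ L, c < m) : L.filter (m ≤ ·) = [] :=
    List.filter_eq_nil_iff.mpr fun c hc => by simpa using hL c hc
  simp [List.filter_append, hx, hy, hz, hnil hP, hnil hQ, hnil hR, hnil hT]

/-- The paper's bijection: the second `n` becomes `n - 1` if `n - 1` lies between the two `n`s
(read off from the large letters `w.filter (n - 1 ≤ ·)`), the first one otherwise. -/
def lowerTop (n : ℕ) (w : List ℕ) : List ℕ :=
  if w.filter (n - 1 ≤ ·) = [n, n - 1, n] then replaceLast w n (n - 1)
  else w.replace n (n - 1)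

def raiseTop (n : ℕ) (v : List ℕ) : List ℕ :=
  if v.filter (n - 1 ≤ ·) = [n - 1, n, n - 1] then v.replace (n - 1) n
  else replaceLast v (n - 1) n

/-- `v` is `w` with one `n` lowered to `n - 1`, at a place where this changes no descent. -/
def TopSwap (n : ℕ) (w v : List ℕ) : Prop :=
  ∃ L R, L ≠ [] ∧ (∀ l ∈ L.getLast?, l < n) ∧ (∀ r ∈ R.head?, r ≠ n - 1) ∧
    w = L ++ n :: R ∧ v = L ++ (n - 1) :: R

section LargeLetters

variable {n : ℕ} {P Q R T : List ℕ}

theorem topSwap_first (hn : 0 < n) (hP₀ : P ≠ []) (hP : ∀ c ∈ P, c < n - 1)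
    (hQ : ∀ c ∈ Q, c < n - 1) (hR : ∀ c ∈ R, c < n - 1) (hT : ∀ c ∈ T, c < n - 1) :
    let w := P ++ n :: Q ++ n :: R ++ (n - 1) :: T
    let v := P ++ (n - 1) :: Q ++ n :: R ++ (n - 1) :: T
    lowerTop n w = v ∧ raiseTop n v = w ∧ TopSwap n w v := by
  refine ⟨?_, ?_, P, Q ++ n :: R ++ (n - 1) :: T, hP₀, fun l hl => ?_, fun r hr => ?_,
    by simp, by simp⟩
  · rw [lowerTop, filter_le_eq_of_lt_of_le hP hQ hR hT (by omega) (by omega) (by omega),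
      if_neg (by simp; omega)]
    simpa using replace_append_cons (R := Q ++ n :: R ++ (n - 1) :: T) (b := n - 1) (by grind)
  · rw [raiseTop, filter_le_eq_of_lt_of_le hP hQ hR hT (by omega) (by omega) (by omega),
      if_pos rfl]
    simpa using replace_append_cons (R := Q ++ n :: R ++ (n - 1) :: T) (b := n) (by grind)
  · have := hP l (List.mem_of_mem_getLast? hl); omega
  · simp only [List.append_assoc, List.cons_append] at hr
    grind

theorem topSwap_second (hn : 0 < n) (hP : ∀ c ∈ P, c < n - 1)
    (hQ : ∀ c ∈ Q, c < n - 1) (hR : ∀ c ∈ R, c < n - 1) (hT : ∀ c ∈ T, c < n - 1) :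
    let w := P ++ (n - 1) :: Q ++ n :: R ++ n :: T
    let v := P ++ (n - 1) :: Q ++ (n - 1) :: R ++ n :: T
    lowerTop n w = v ∧ raiseTop n v = w ∧ TopSwap n w v := by
  refine ⟨?_, ?_, P ++ (n - 1) :: Q, R ++ n :: T, by simp, fun l hl => ?_, fun r hr => ?_,
    by simp, by simp⟩
  · rw [lowerTop, filter_le_eq_of_lt_of_le hP hQ hR hT (by omega) (by omega) (by omega),
      if_neg (by simp; omega)]
    simpa using replace_append_cons (L := P ++ (n - 1) :: Q) (R := R ++ n :: T) (b := n - 1)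
      (by grind)
  · rw [raiseTop, filter_le_eq_of_lt_of_le hP hQ hR hT (by omega) (by omega) (by omega),
      if_neg (by simp; omega)]
    simpa using replaceLast_append_cons (L := P ++ (n - 1) :: Q) (R := R ++ n :: T)
      (a := n - 1) (b := n) (by grind)
  · rcases mem_getLast?_append_cons hl with rfl | hl <;> grind
  · grind

theorem topSwap_third (hn : 0 < n) (hP : ∀ c ∈ P, c < n - 1)
    (hQ : ∀ c ∈ Q, c < n - 1) (hR : ∀ c ∈ R, c < n - 1) (hT : ∀ c ∈ T, c < n - 1) :
    let w := P ++ n :: Q ++ (n - 1) :: R ++ n :: T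
    let v := P ++ n :: Q ++ (n - 1) :: R ++ (n - 1) :: T
    lowerTop n w = v ∧ raiseTop n v = w ∧ TopSwap n w v := by
  refine ⟨?_, ?_, P ++ n :: Q ++ (n - 1) :: R, T, by simp, fun l hl => ?_, fun r hr => ?_,
    rfl, rfl⟩
  · rw [lowerTop, filter_le_eq_of_lt_of_le hP hQ hR hT (by omega) (by omega) (by omega),
      if_pos rfl]
    exact replaceLast_append_cons (by grind)
  · rw [raiseTop, filter_le_eq_of_lt_of_le hP hQ hR hT (by omega) (by omega) (by omega),
      if_neg (by simp; omega)]
    exact replaceLast_append_cons (by grind)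
  · rcases mem_getLast?_append_cons hl with rfl | hl <;> grind
  · have := hT r (List.mem_of_mem_head? hr); omega

end LargeLetters

theorem TopSwap.right_mem {S : Multiset ℕ} {n : ℕ} {w v : List ℕ} (h : TopSwap n w v)
    (hw : w ∈ flatIns (S + {n}) n) : v ∈ flatIns (S + {n - 1}) n ∧ numRuns v = numRuns w := by
  obtain ⟨L, R, hL₀, hL, hR, rfl, rfl⟩ := h
  exact replace_mem_flatIns hw hL₀ (fun l hl => by have := hL l hl; omega)
    (fun r hr => by have := hR r hr; omega)

theorem TopSwap.left_mem {S : Multiset ℕ} {n : ℕ} {w v : List ℕ} (h : TopSwap n w v)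
    (hv : v ∈ flatIns (S + {n - 1}) n) : w ∈ flatIns (S + {n}) n := by
  obtain ⟨L, R, hL₀, hL, hR, rfl, rfl⟩ := h
  exact (replace_mem_flatIns hv hL₀ (fun l hl => by have := hL l hl; omega)
    (fun r hr => by have := hR r hr; omega)).1

theorem lowerTop_spec {S : Multiset ℕ} {n : ℕ} {w : List ℕ} (hn : 3 ≤ n)
    (hS : ∀ s ∈ S, s ≤ n - 2) (hw : w ∈ flatIns (S + {n}) n) :
    TopSwap n w (lowerTop n w) ∧ raiseTop n (lowerTop n w) = w := by
  obtain ⟨P, Q, R, T, x, y, z, rfl, hP₀, hP, hQ, hR, hT, hperm⟩ :=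
    exists_eq_large_letters hn hS (Nat.sub_le n 1) hw
  rcases eq_or_eq_or_eq_of_perm (by omega) hperm with h | h | h <;>
    obtain ⟨rfl, rfl, rfl⟩ : x = _ ∧ y = _ ∧ z = _ := by simpa using h
  · obtain ⟨hlower, hraise, hswap⟩ := topSwap_second (by omega) hP hQ hR hT
    exact ⟨hlower ▸ hswap, hlower ▸ hraise⟩
  · obtain ⟨hlower, hraise, hswap⟩ := topSwap_third (by omega) hP hQ hR hT
    exact ⟨hlower ▸ hswap, hlower ▸ hraise⟩
  · obtain ⟨hlower, hraise, hswap⟩ := topSwap_first (by omega) hP₀ hP hQ hR hT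
    exact ⟨hlower ▸ hswap, hlower ▸ hraise⟩

theorem raiseTop_spec {S : Multiset ℕ} {n : ℕ} {v : List ℕ} (hn : 3 ≤ n)
    (hS : ∀ s ∈ S, s ≤ n - 2) (hv : v ∈ flatIns (S + {n - 1}) n) :
    TopSwap n (raiseTop n v) v ∧ lowerTop n (raiseTop n v) = v := by
  obtain ⟨P, Q, R, T, x, y, z, rfl, hP₀, hP, hQ, hR, hT, hperm⟩ :=
    exists_eq_large_letters hn hS le_rfl hv
  rcases eq_or_eq_or_eq_of_perm (by omega) (hperm.trans (.swap _ _ _)) with h | h | h <;>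
    obtain ⟨rfl, rfl, rfl⟩ : x = _ ∧ y = _ ∧ z = _ := by simpa using h
  · obtain ⟨hlower, hraise, hswap⟩ := topSwap_third (by omega) hP hQ hR hT
    exact ⟨hraise ▸ hswap, hraise ▸ hlower⟩
  · obtain ⟨hlower, hraise, hswap⟩ := topSwap_first (by omega) hP₀ hP hQ hR hT
    exact ⟨hraise ▸ hswap, hraise ▸ hlower⟩
  · obtain ⟨hlower, hraise, hswap⟩ := topSwap_second (by omega) hP hQ hR hT
    exact ⟨hraise ▸ hswap, hraise ▸ hlower⟩

end FlatPF

open FlatPF in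
/-- For `S` with elements in `[n-2]`, the flattened `(S ∪ {n})`-insertion parking
functions of order `n` are in bijection with the flattened `(S ∪ {n-1})`-insertion
parking functions of order `n`, via a bijection preserving the number of runs. -/
theorem stmt6 (n : ℕ) (hn : 3 ≤ n) (S : Multiset ℕ) (hS : ∀ s ∈ S, 1 ≤ s ∧ s ≤ n - 2) :
    ∃ ψ : List ℕ → List ℕ,
      Set.BijOn ψ (flatIns (S + {n}) n) (flatIns (S + {n - 1}) n) ∧
      ∀ w ∈ flatIns (S + {n}) n, numRuns (ψ w) = numRuns w := by
  have hS' : ∀ s ∈ S, s ≤ n - 2 := fun s hs => (hS s hs).2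
  have hlower {w} (hw : w ∈ flatIns (S + {n}) n) := lowerTop_spec hn hS' hw
  have hraise {v} (hv : v ∈ flatIns (S + {n - 1}) n) := raiseTop_spec hn hS' hv
  refine ⟨lowerTop n, Set.InvOn.bijOn (f' := raiseTop n) ⟨fun w hw => (hlower hw).2,
    fun v hv => (hraise hv).2⟩ (fun w hw => ((hlower hw).1.right_mem hw).1)
    (fun v hv => (hraise hv).1.left_mem hv), fun w hw => ((hlower hw).1.right_mem hw).2⟩
end
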